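/- arXiv:2503.01036 — 4 statements merged into one kernel-verified Lean document; each statement's English description precedes it below -/
import Mathlib

section
/- Let 𝒰 be a real normed space, 𝒴 a compact topological space, 𝒮 a set, Φ : 𝒰 → 𝒴 → 𝒮 a map, and P, P̂, P̄ : 𝒮 → ℝ functions. Suppose 𝒫, 𝒫̂ : 𝒰 → C(𝒴, ℝ) are maps satisfying 𝒫(v)(y) = P(Φ(v, y)) + P̄(Φ(v, y)) and 𝒫̂(v)(y) = P̂(Φ(v, y)) + P̄(Φ(v, y)) for all v ∈ 𝒰 and y ∈ 𝒴. Let B ⊆ 𝒮 and E ≥ 0 be such that |P(s) − P̂(s)| ≤ E for all s ∈ B, let B′ ⊆ C(𝒴, ℝ), and let 𝒫inv : C(𝒴, ℝ) → 𝒰 and L ≥ 0 satisfy ‖𝒫inv g − 𝒫inv g′‖_𝒰 ≤ L‖g − g′‖_∞ for all g, g′ ∈ B′. Fix f ∈ B′ and û ∈ 𝒰 such that 𝒫̂(û) = f, Φ(û, y) ∈ B for every y ∈ 𝒴, 𝒫(û) ∈ B′, and 𝒫inv(𝒫(û)) = û. Then ‖û − 𝒫inv f‖_𝒰 ≤ L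 · E. -/
/-- Operator-learning error bound for a learned differential operator of the
form `𝒫(v)(y) = (P + P̄)(Φ(v, y))`: if the learned nonlinearity `P̂` is
uniformly `E`-close to `P` on `B`, the solution operator `Pinv` is
`L`-Lipschitz on `B'` (with respect to the sup norm on `C(Y, ℝ)`), and `û`
solves the learned equation `Pophat(û) = f` with feature values in `B`, then
`‖û − Pinv f‖ ≤ L E`. -/
theorem operator_learning_error_learned_pde
    {U : Type*} [NormedAddCommGroup U] [NormedSpace ℝ U]
    {Y : Type*} [TopologicalSpace Y] [CompactSpace Y]
    {S : Type*}
    (Φ : U → Y → S) (P Phat Pbar : S → ℝ)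
    (Pop Pophat : U → C(Y, ℝ))
    (hPop : ∀ v : U, ∀ y : Y, Pop v y = P (Φ v y) + Pbar (Φ v y))
    (hPophat : ∀ v : U, ∀ y : Y, Pophat v y = Phat (Φ v y) + Pbar (Φ v y))
    (B : Set S) (E : ℝ) (hE : 0 ≤ E)
    (hclose : ∀ s ∈ B, |P s - Phat s| ≤ E)
    (B' : Set C(Y, ℝ)) (Pinv : C(Y, ℝ) → U) (L : ℝ) (hL : 0 ≤ L)
    (hLip : ∀ g ∈ B', ∀ g' ∈ B', ‖Pinv g - Pinv g'‖ ≤ L * ‖g - g'‖)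
    (f : C(Y, ℝ)) (hf : f ∈ B') (uhat : U)
    (hsolve : Pophat uhat = f)
    (hfeat : ∀ y : Y, Φ uhat y ∈ B)
    (hPu : Pop uhat ∈ B')
    (hleft : Pinv (Pop uhat) = uhat) :
    ‖uhat - Pinv f‖ ≤ L * E := by
  have hnorm : ‖Pop uhat - f‖ ≤ E := by
    rw [ContinuousMap.norm_le _ hE]
    intro y
    have : (Pop uhat - f) y = P (Φ uhat y) - Phat (Φ uhat y) := by
      simp [hPop, ← hsolve, hPophat]

    rw [this]
    simpa [Real.norm_eq_abs] using hclose _ (hfeat y)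
  calc ‖uhat - Pinv f‖ = ‖Pinv (Pop uhat) - Pinv f‖ := by rw [hleft]
    _ ≤ L * ‖Pop uhat - f‖ := hLip _ hPu _ hf
    _ ≤ L * E := by nlinarith
end

section
/- Let H be a real Hilbert space, F a finite-dimensional real inner product space, T : H → F a continuous linear map with Hilbert adjoint T*, b ∈ F, and λ > 0. Then the map w ↦ T(T* w) + λ w is a bijection of F; moreover, letting w̄ denote the unique solution of T(T* w̄) + λ w̄ = b, the element v̂ := T* w̄ is the unique minimizer over H of the functional v ↦ λ‖v‖² + ‖T v − b‖². -/
/-- Regularized (ridge) representer formula: for `λ > 0`, the map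
`w ↦ T T* w + λ w` on the finite-dimensional space `F` is a bijection, and if
`w̄` solves `T T* w̄ + λ w̄ = b`, then `v̂ = T* w̄` is the unique minimizer of
`v ↦ λ‖v‖² + ‖T v − b‖²` over `H`. -/
theorem ridge_representer_formula
    {H F : Type*} [NormedAddCommGroup H] [InnerProductSpace ℝ H] [CompleteSpace H]
    [NormedAddCommGroup F] [InnerProductSpace ℝ F] [FiniteDimensional ℝ F]
    (T : H →L[ℝ] F) (b : F) (lam : ℝ) (hlam : 0 < lam) :
    Function.Bijective (fun w : F => T (ContinuousLinearMap.adjoint T w) + lam • w) ∧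
    ∀ wbar : F, T (ContinuousLinearMap.adjoint T wbar) + lam • wbar = b →
      (∀ v : H,
        lam * ‖ContinuousLinearMap.adjoint T wbar‖ ^ 2 +
            ‖T (ContinuousLinearMap.adjoint T wbar) - b‖ ^ 2 ≤
          lam * ‖v‖ ^ 2 + ‖T v - b‖ ^ 2) ∧
      (∀ v : H,
        (∀ u : H, lam * ‖v‖ ^ 2 + ‖T v - b‖ ^ 2 ≤ lam * ‖u‖ ^ 2 + ‖T u - b‖ ^ 2) →
        v = ContinuousLinearMap.adjoint T wbar) := by
  constructor
  · -- bijectivity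
    set L : F →ₗ[ℝ] F :=
      (T.comp (ContinuousLinearMap.adjoint T)).toLinearMap + lam • LinearMap.id with hL
    have hfun : (fun w : F => T (ContinuousLinearMap.adjoint T w) + lam • w) = L := by
      ext w; simp [hL]
    rw [hfun]
    have hinj : Function.Injective L := by
      rw [← LinearMap.ker_eq_bot, LinearMap.ker_eq_bot']
      intro w hw
      have h1 : inner ℝ (L w) w = (0 : ℝ) := by rw [hw]; simp
      have h2 : inner ℝ (L w) w
          = ‖ContinuousLinearMap.adjoint T w‖ ^ 2 + lam * ‖w‖ ^ 2 := by
        have hadj : inner ℝ (T (ContinuousLinearMap.adjoint T w)) w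
            = ‖ContinuousLinearMap.adjoint T w‖ ^ 2 := by
          rw [← ContinuousLinearMap.adjoint_inner_right]
          exact real_inner_self_eq_norm_sq _
        simp [hL, inner_add_left, real_inner_smul_left, real_inner_self_eq_norm_sq, hadj]
      by_contra hne
      have hpos : 0 < ‖ContinuousLinearMap.adjoint T w‖ ^ 2 + lam * ‖w‖ ^ 2 := by
        have hwpos : 0 < ‖w‖ ^ 2 := by
          have := norm_pos_iff.mpr hne
          positivity
        have : 0 < lam * ‖w‖ ^ 2 := mul_pos hlam hwpos
        nlinarith [sq_nonneg ‖ContinuousLinearMap.adjoint T w‖]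
      rw [h2] at h1; linarith
    exact ⟨hinj, (LinearMap.injective_iff_surjective).mp hinj⟩
  · intro wbar hw
    set vh := ContinuousLinearMap.adjoint T wbar with hvh
    have hres : T vh - b = -(lam • wbar) := by
      have : T vh - b = T vh + lam • wbar - b - lam • wbar := by abel
      rw [this, hvh, hw]; abel
    have hstat : ContinuousLinearMap.adjoint T (T vh - b) = -(lam • vh) := by
      rw [hres]; simp [hvh]
    have key : ∀ v : H, lam * ‖v‖ ^ 2 + ‖T v - b‖ ^ 2
        = (lam * ‖vh‖ ^ 2 + ‖T vh - b‖ ^ 2) + (lam * ‖v - vh‖ ^ 2 + ‖T (v - vh)‖ ^ 2) := by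
      intro v
      have hv : v = vh + (v - vh) := by abel
      have h1 : ‖v‖ ^ 2 = ‖vh‖ ^ 2 + 2 * inner ℝ vh (v - vh) + ‖v - vh‖ ^ 2 := by
        conv_lhs => rw [hv]
        exact norm_add_sq_real _ _
      have h2 : T v - b = (T vh - b) + T (v - vh) := by
        rw [map_sub]; abel
      have h3 : ‖T v - b‖ ^ 2 = ‖T vh - b‖ ^ 2
          + 2 * inner ℝ (T vh - b) (T (v - vh)) + ‖T (v - vh)‖ ^ 2 := by
        rw [h2]; exact norm_add_sq_real _ _
      have hcross : inner ℝ (T vh - b) (T (v - vh))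
          = -(lam * inner ℝ vh (v - vh)) := by
        rw [← ContinuousLinearMap.adjoint_inner_left, hstat]
        simp [real_inner_smul_left]
      rw [h1, h3, hcross]; ring
    refine ⟨fun v => by
      have := key v
      nlinarith [sq_nonneg ‖v - vh‖, sq_nonneg ‖T (v - vh)‖, mul_nonneg hlam.le (sq_nonneg ‖v - vh‖)],
      fun v hv => ?_⟩
    have h1 := hv vh
    have h2 := key v
    have hz : ‖v - vh‖ ^ 2 = 0 := by
      nlinarith [sq_nonneg ‖T (v - vh)‖, sq_nonneg ‖v - vh‖,
        mul_nonneg hlam.le (sq_nonneg ‖v - vh‖)]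
    have : v - vh = 0 := by
      rwa [pow_eq_zero_iff (by norm_num), norm_eq_zero] at hz
    rw [sub_eq_zero] at this; exact this
end

section
/- Let K and H be real inner product spaces, M ∈ ℕ, and S ⊆ K × H^M. Suppose (P̂, û¹, …, û^M) ∈ S satisfies ‖P̂‖² + Σₘ ‖ûᵐ‖² ≤ ‖G‖² + Σₘ ‖vᵐ‖² for every (G, v¹, …, v^M) ∈ S, and let (P, u¹, …, u^M) ∈ S. Further suppose ū¹, …, ū^M ∈ H satisfy ⟨uᵐ − ūᵐ, ūᵐ⟩ = 0 and ‖ūᵐ‖ ≤ ‖ûᵐ‖ for each m = 1, …, M. Then ‖P̂‖² ≤ ‖P‖² + Σₘ ‖uᵐ − ūᵐ‖². -/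
open Finset

section Pythagoras

variable {E : Type*} [NormedAddCommGroup E] [InnerProductSpace ℝ E]

theorem norm_sq_eq_norm_sub_sq_add_norm_sq_of_inner_sub_eq_zero {u v : E}
    (h : inner ℝ (u - v) v = 0) : ‖u‖ ^ 2 = ‖u - v‖ ^ 2 + ‖v‖ ^ 2 := by
  simpa [h] using norm_add_sq_real (u - v) v

theorem norm_sq_le_norm_sub_sq_add_norm_sq_of_inner_sub_eq_zero {u v w : E}
    (h : inner ℝ (u - v) v = 0) (hvw : ‖v‖ ≤ ‖w‖) : ‖u‖ ^ 2 ≤ ‖u - v‖ ^ 2 + ‖w‖ ^ 2 := by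
  rw [norm_sq_eq_norm_sub_sq_add_norm_sq_of_inner_sub_eq_zero h]
  gcongr

end Pythagoras

theorem one_step_equation_norm_bound_general
    {K H : Type*} [NormedAddCommGroup K] [InnerProductSpace ℝ K]
    [NormedAddCommGroup H] [InnerProductSpace ℝ H]
    (M : ℕ) (S : Set (K × (Fin M → H)))
    (Phat : K) (uhat : Fin M → H)
    (hopt : ∀ G : K, ∀ v : Fin M → H, (G, v) ∈ S →
      ‖Phat‖ ^ 2 + ∑ m, ‖uhat m‖ ^ 2 ≤ ‖G‖ ^ 2 + ∑ m, ‖v m‖ ^ 2)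
    (P : K) (u : Fin M → H) (hu : (P, u) ∈ S)
    (ubar : Fin M → H)
    (horth : ∀ m, (inner ℝ (u m - ubar m) (ubar m) : ℝ) = 0)
    (hle : ∀ m, ‖ubar m‖ ≤ ‖uhat m‖) :
    ‖Phat‖ ^ 2 ≤ ‖P‖ ^ 2 + ∑ m, ‖u m - ubar m‖ ^ 2 := by
  have hsum : ∑ m, ‖u m‖ ^ 2 ≤ ∑ m, ‖u m - ubar m‖ ^ 2 + ∑ m, ‖uhat m‖ ^ 2 := by
    rw [← sum_add_distrib]
    exact sum_le_sum fun m _ =>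
      norm_sq_le_norm_sub_sq_add_norm_sq_of_inner_sub_eq_zero (horth m) (hle m)
  linarith [hopt P u hu]

/-- Key inequality for the quantitative error bound on the learned equation in
1-step kernel equation learning: if `(P̂, û)` minimizes the joint norm budget
over the feasible set `S`, `(P, u) ∈ S`, and `ūᵐ` are interpolants with
`⟨uᵐ − ūᵐ, ūᵐ⟩ = 0` and `‖ūᵐ‖ ≤ ‖ûᵐ‖`, then
`‖P̂‖² ≤ ‖P‖² + Σₘ ‖uᵐ − ūᵐ‖²`. -/
theorem one_step_equation_norm_bound
    {K H : Type*} [NormedAddCommGroup K] [InnerProductSpace ℝ K]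
    [NormedAddCommGroup H] [InnerProductSpace ℝ H]
    (M : ℕ) (S : Set (K × (Fin M → H)))
    (Phat : K) (uhat : Fin M → H) (hfeas : (Phat, uhat) ∈ S)
    (hopt : ∀ G : K, ∀ v : Fin M → H, (G, v) ∈ S →
      ‖Phat‖ ^ 2 + ∑ m, ‖uhat m‖ ^ 2 ≤ ‖G‖ ^ 2 + ∑ m, ‖v m‖ ^ 2)
    (P : K) (u : Fin M → H) (hu : (P, u) ∈ S)
    (ubar : Fin M → H)
    (horth : ∀ m, (inner ℝ (u m - ubar m) (ubar m) : ℝ) = 0)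
    (hle : ∀ m, ‖ubar m‖ ≤ ‖uhat m‖) :
    ‖Phat‖ ^ 2 ≤ ‖P‖ ^ 2 + ∑ m, ‖u m - ubar m‖ ^ 2 :=
  one_step_equation_norm_bound_general M S Phat uhat hopt P u hu ubar horth hle
end

section
/- Let K and H be real normed spaces, let P ∈ K and u ∈ H, and let (P̂_N), (û_N), (ū_N) be sequences in K, H, H respectively such that for every N: ‖P̂_N‖² + ‖û_N‖² ≤ ‖P‖² + ‖u‖² and ‖ū_N‖ ≤ ‖û_N‖, and such that ‖u − ū_N‖ → 0 as N → ∞. Then limsup_{N→∞} ‖P̂_N‖ ≤ ‖P‖. -/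
open Filter

/-- Abstract step in the convergence proof for the learned equation: joint
optimality gives `‖P̂_N‖² + ‖û_N‖² ≤ ‖P‖² + ‖u‖²`, feasibility gives
`‖ū_N‖ ≤ ‖û_N‖`, and `ū_N → u` in norm; together these force
`limsup ‖P̂_N‖ ≤ ‖P‖`. -/
theorem learned_equation_norm_limsup
    {K H : Type*} [NormedAddCommGroup K] [NormedAddCommGroup H]
    (P : K) (u : H)
    (Phat : ℕ → K) (uhat ubar : ℕ → H)
    (hopt : ∀ N, ‖Phat N‖ ^ 2 + ‖uhat N‖ ^ 2 ≤ ‖P‖ ^ 2 + ‖u‖ ^ 2)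
    (hfeas : ∀ N, ‖ubar N‖ ≤ ‖uhat N‖)
    (hconv : Tendsto (fun N => ‖u - ubar N‖) atTop (nhds 0)) :
    Filter.limsup (fun N => ‖Phat N‖) atTop ≤ ‖P‖ := by
  set g : ℕ → ℝ := fun N => Real.sqrt (‖P‖ ^ 2 + ‖u‖ ^ 2 - ‖ubar N‖ ^ 2) with hg
  -- ubar → u, hence ‖ubar N‖ → ‖u‖
  have hnorm : Tendsto (fun N => ‖ubar N‖) atTop (nhds ‖u‖) := by
    have h1 : Tendsto ubar atTop (nhds u) := by
      rw [tendsto_iff_norm_sub_tendsto_zero]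
      simpa [norm_sub_rev] using hconv
    exact (continuous_norm.tendsto u).comp h1
  have hgt : Tendsto g atTop (nhds ‖P‖) := by
    have h2 : Tendsto (fun N => ‖P‖ ^ 2 + ‖u‖ ^ 2 - ‖ubar N‖ ^ 2) atTop
        (nhds (‖P‖ ^ 2)) := by
      have := ((hnorm.pow 2).const_sub (‖P‖ ^ 2 + ‖u‖ ^ 2))
      simpa using this
    have := (Real.continuous_sqrt.tendsto (‖P‖ ^ 2)).comp h2
    rw [Real.sqrt_sq (norm_nonneg P)] at this
    exact this
  have hle : ∀ N, ‖Phat N‖ ≤ g N := by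
    intro N
    have h3 : ‖Phat N‖ ^ 2 ≤ ‖P‖ ^ 2 + ‖u‖ ^ 2 - ‖ubar N‖ ^ 2 := by
      have h4 : ‖ubar N‖ ^ 2 ≤ ‖uhat N‖ ^ 2 :=
        pow_le_pow_left₀ (norm_nonneg _) (hfeas N) 2
      nlinarith [hopt N]
    calc ‖Phat N‖ = Real.sqrt (‖Phat N‖ ^ 2) := (Real.sqrt_sq (norm_nonneg _)).symm
      _ ≤ g N := Real.sqrt_le_sqrt h3
  have hcb : IsCoboundedUnder (· ≤ ·) atTop (fun N => ‖Phat N‖) :=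
    isCoboundedUnder_le_of_le atTop (fun N => norm_nonneg _)
  have hbd : IsBoundedUnder (· ≤ ·) atTop g := hgt.isBoundedUnder_le
  calc Filter.limsup (fun N => ‖Phat N‖) atTop
      ≤ Filter.limsup g atTop :=
        limsup_le_limsup (Eventually.of_forall hle) hcb hbd
    _ = ‖P‖ := hgt.limsup_eq
end
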